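/- Optimism of the finitely-iterated Q-estimate: suppose U ≥ 1, suppose max_{s∈S}(MQ*)(s) − min_{s∈S}(MQ*)(s) ≤ H, and suppose the concentration condition |(P̂_{s,a} − P_{s,a})·(MQ*)| ≤ 2√(𝕍(P̂_{s,a}, MQ*)·U/n(s,a)) + 14HU/(3·n(s,a)) holds for all (s,a) ∈ S×A. Let ε > 0 and let m be a natural number with γ^m·(1 + 32HU)/(1 − γ) ≤ ε. Then (T̂^m(0))(s,a) ≥ Q*(s,a) − ε for all (s,a) ∈ S×A, and Clip_H(M(T̂^m(0)))(s) ≥ (MQ*)(s) − ε for all s ∈ S, where 0 denotes the zero function on S×A. -/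

import Mathlib

open Finset

/-- Dot product of a probability vector `p` with a value vector `v`. -/
noncomputable def probDot {S : Type*} [Fintype S] (p v : S → ℝ) : ℝ :=
  ∑ s, p s * v s

/-- Variance of `v` under the probability vector `p`. -/
noncomputable def probVar {S : Type*} [Fintype S] (p v : S → ℝ) : ℝ :=
  (∑ s, p s * (v s) ^ 2) - (probDot p v) ^ 2

/-- `(MQ)(s) = max_a Q(s,a)`. -/
noncomputable def maxOp {S A : Type*} [Fintype A] [Nonempty A] (Q : S → A → ℝ) (s : S) : ℝ :=
  Finset.univ.sup' Finset.univ_nonempty (Q s)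

/-- `Clip_H(V)(s) = min (V s) (min_{s'} V s' + H)`. -/
noncomputable def clipOp {S : Type*} [Fintype S] [Nonempty S] (H : ℝ) (V : S → ℝ) (s : S) : ℝ :=
  min (V s) (Finset.univ.inf' Finset.univ_nonempty V + H)

/-- The exploration bonus `b(s,a,V)`. -/
noncomputable def bonus {S A : Type*} [Fintype S] (Phat : S → A → S → ℝ)
    (cnt : S → A → ℝ) (U H : ℝ) (s : S) (a : A) (V : S → ℝ) : ℝ :=
  max (4 * Real.sqrt (probVar (Phat s a) V * U / cnt s a)) (32 * H * U / cnt s a)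

/-- The clipped optimistic empirical Bellman operator `T̂`. -/
noncomputable def bellmanOp {S A : Type*} [Fintype S] [Fintype A] [Nonempty S] [Nonempty A]
    (γ H U : ℝ) (r : S → A → ℝ) (cnt : S → A → ℝ) (Phat : S → A → S → ℝ)
    (Q : S → A → ℝ) : S → A → ℝ := fun s a =>
  r s a + γ * probDot (Phat s a) (clipOp H (maxOp Q))
    + γ * bonus Phat cnt U H s a (clipOp H (maxOp Q))

/-!
Optimism propagates through one application of `T̂`: if `Q ≥ Q* - δ` then `T̂ Q ≥ Q* - γ δ`.
Since `V* = MQ*` has span at most `H`, clipping `MQ` keeps the bound `W := Clip_H(MQ) ≥ V* - δ`.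
The bonus then has to pay for the concentration error of `V*`, which is stated in terms of the
empirical variance of `V*` rather than of `W`. As `W - V*` takes values in an interval of length
`2H`, the Bhatia–Davis bound gives `𝕍(P̂, V*) ≤ 2 𝕍(P̂, W) + 4H (P̂·(W - V*) + δ)`, and after
AM-GM the excess `P̂·(W - V*) + δ` is exactly the slack between `P̂·W` and `P̂·V* - δ`.
Starting from `0 ≥ Q* - (1 + 32HU)/(1 - γ)` (because `Q* ≤ 1/(1 - γ)`), `m` iterations leave
an error of at most `γ^m (1 + 32HU)/(1 - γ) ≤ ε`.
-/

section ProbVec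

variable {S : Type*} [Fintype S]

structure IsProbVec (p : S → ℝ) : Prop where
  nonneg : ∀ s, 0 ≤ p s
  sum_eq_one : ∑ s, p s = 1

theorem probDot_sub (p v w : S → ℝ) : probDot p (v - w) = probDot p v - probDot p w := by
  simp only [probDot, Pi.sub_apply, mul_sub, sum_sub_distrib]

theorem probDot_le_of_forall_le {p v : S → ℝ} {M : ℝ} (hp : IsProbVec p) (h : ∀ s, v s ≤ M) :
    probDot p v ≤ M :=
  calc probDot p v ≤ ∑ s, p s * M :=
        sum_le_sum fun s _ => mul_le_mul_of_nonneg_left (h s) (hp.nonneg s)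
    _ = M := by rw [← sum_mul, hp.sum_eq_one, one_mul]

theorem le_probDot_of_forall_le {p v : S → ℝ} {M : ℝ} (hp : IsProbVec p) (h : ∀ s, M ≤ v s) :
    M ≤ probDot p v :=
  calc M = ∑ s, p s * M := by rw [← sum_mul, hp.sum_eq_one, one_mul]
    _ ≤ probDot p v :=
        sum_le_sum fun s _ => mul_le_mul_of_nonneg_left (h s) (hp.nonneg s)

theorem sum_mul_sub_sq_eq_probVar_add {p : S → ℝ} (hp : ∑ s, p s = 1) (v : S → ℝ) (c : ℝ) :
    ∑ s, p s * (v s - c) ^ 2 = probVar p v + (probDot p v - c) ^ 2 := by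
  have expand : ∀ s, p s * (v s - c) ^ 2 = p s * v s ^ 2 - 2 * c * (p s * v s) + c ^ 2 * p s :=
    fun s => by ring
  simp only [expand, sum_add_distrib, sum_sub_distrib, ← mul_sum, hp,
    probVar, probDot]
  ring

theorem probVar_le_sum_mul_sub_sq {p : S → ℝ} (hp : ∑ s, p s = 1) (v : S → ℝ) (c : ℝ) :
    probVar p v ≤ ∑ s, p s * (v s - c) ^ 2 := by
  rw [sum_mul_sub_sq_eq_probVar_add hp]
  exact le_add_of_nonneg_right (sq_nonneg _)

theorem probVar_eq_sum_mul_sub_sq {p : S → ℝ} (hp : ∑ s, p s = 1) (v : S → ℝ) :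
    probVar p v = ∑ s, p s * (v s - probDot p v) ^ 2 := by
  simp [sum_mul_sub_sq_eq_probVar_add hp]

theorem probVar_nonneg {p : S → ℝ} (hp : IsProbVec p) (v : S → ℝ) : 0 ≤ probVar p v := by
  rw [probVar_eq_sum_mul_sub_sq hp.sum_eq_one]
  exact sum_nonneg fun s _ => mul_nonneg (hp.nonneg s) (sq_nonneg _)

theorem probVar_sub_le {p : S → ℝ} (hp : IsProbVec p) (v w : S → ℝ) :
    probVar p (v - w) ≤ 2 * probVar p v + 2 * probVar p w := by
  set a := fun s => v s - probDot p v
  set b := fun s => w s - probDot p w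
  calc probVar p (v - w) ≤ ∑ s, p s * ((v - w) s - (probDot p v - probDot p w)) ^ 2 :=
        probVar_le_sum_mul_sub_sq hp.sum_eq_one _ _
    _ ≤ ∑ s, (2 * (p s * a s ^ 2) + 2 * (p s * b s ^ 2)) := by
        refine sum_le_sum fun s _ => ?_
        have hab : (v - w) s - (probDot p v - probDot p w) = a s - b s := by
          simp only [a, b, Pi.sub_apply]; ring
        rw [hab]
        nlinarith [hp.nonneg s, mul_nonneg (hp.nonneg s) (sq_nonneg (a s + b s))]
    _ = 2 * probVar p v + 2 * probVar p w := by
        rw [sum_add_distrib, ← mul_sum, ← mul_sum,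
          ← probVar_eq_sum_mul_sub_sq hp.sum_eq_one, ← probVar_eq_sum_mul_sub_sq hp.sum_eq_one]

theorem probVar_le_mul_probDot_sub {p d : S → ℝ} {c B : ℝ} (hp : IsProbVec p)
    (hlo : ∀ s, c ≤ d s) (hhi : ∀ s, d s ≤ c + B) :
    probVar p d ≤ B * (probDot p d - c) :=
  calc probVar p d ≤ ∑ s, p s * (d s - c) ^ 2 := probVar_le_sum_mul_sub_sq hp.sum_eq_one d c
    _ ≤ ∑ s, p s * (B * (d s - c)) := by
        refine sum_le_sum fun s _ => mul_le_mul_of_nonneg_left ?_ (hp.nonneg s)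
        nlinarith [hlo s, hhi s]
    _ = B * (probDot p d - c) := by
        simp only [mul_sub, sum_sub_distrib, mul_left_comm _ B, ← mul_sum,
          ← sum_mul, hp.sum_eq_one, probDot]
        ring

end ProbVec

theorem two_sqrt_le_of_le_two_mul_add_mul {a b e K : ℝ} (h : a ≤ 2 * b + e * K) (hb : 0 ≤ b)
    (he : 0 ≤ e) (hK : 0 ≤ K) :
    2 * √a ≤ 2 * √2 * √b + e + K := by
  have h2b : (√(2 * b)) ^ 2 = 2 * b := Real.sq_sqrt (by positivity)
  have hsqrt : √a ≤ √(2 * b) + (e + K) / 2 := by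
    refine Real.sqrt_le_iff.mpr ⟨by positivity, ?_⟩
    nlinarith [sq_nonneg (e - K), mul_nonneg (Real.sqrt_nonneg (2 * b)) (add_nonneg he hK)]
  rw [Real.sqrt_mul zero_le_two] at hsqrt
  linarith

theorem two_mul_sqrt_two_mul_add_le_max {y : ℝ} (hy : 0 ≤ y) (z : ℝ) :
    2 * √2 * y + 26 / 3 * z ≤ max (4 * y) (32 * z) := by
  -- the max dominates the convex combination `35/48 * (4 * y) + 13/48 * (32 * z)`
  have hsqrt2 : √2 ≤ 36 / 25 := (Real.sqrt_le_left (by norm_num)).mpr (by norm_num)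
  nlinarith [le_max_left (4 * y) (32 * z), le_max_right (4 * y) (32 * z),
    mul_le_mul_of_nonneg_right hsqrt2 hy]

section Clip

variable {S : Type*} [Fintype S] [Nonempty S]

theorem clipOp_le_clipOp_add {H : ℝ} (hH : 0 ≤ H) (V : S → ℝ) (t u : S) :
    clipOp H V t ≤ clipOp H V u + H := by
  have hinf : univ.inf' univ_nonempty V ≤ clipOp H V u :=
    le_min (inf'_le V (mem_univ u)) (le_add_of_nonneg_right hH)
  have hclip : clipOp H V t ≤ univ.inf' univ_nonempty V + H := min_le_right _ _
  linarith

theorem sub_le_clipOp {H δ : ℝ} {V W : S → ℝ} (hspan : ∀ t u, V t ≤ V u + H)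
    (hW : ∀ t, V t - δ ≤ W t) (s : S) :
    V s - δ ≤ clipOp H W s := by
  refine le_min (hW s) ?_
  rw [← sub_le_iff_le_add]
  exact le_inf' _ _ fun u _ => by linarith [hspan s u, hW u]

theorem le_add_of_sup'_sub_inf'_le {H : ℝ} {V : S → ℝ}
    (hspan : univ.sup' univ_nonempty V - univ.inf' univ_nonempty V ≤ H) (t u : S) :
    V t ≤ V u + H := by
  linarith [le_sup' V (mem_univ t), inf'_le V (mem_univ u)]

end Clip

section Transfer

variable {S : Type*} [Fintype S] [Nonempty S]

theorem probVar_le_two_mul_probVar_add {p V W : S → ℝ} {H δ : ℝ} (hp : IsProbVec p) (hH : 0 ≤ H)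
    (hW : ∀ t, V t - δ ≤ W t) (hVspan : ∀ t u, V t ≤ V u + H) (hWspan : ∀ t u, W t ≤ W u + H) :
    probVar p V ≤ 2 * probVar p W + (probDot p W - probDot p V + δ) * (4 * H) := by
  set D := W - V
  set c := univ.inf' univ_nonempty D
  have hc : -δ ≤ c := le_inf' _ _ fun t _ => by simp only [D, Pi.sub_apply]; linarith [hW t]
  have hlo : ∀ t, c ≤ D t := fun t => inf'_le D (mem_univ t)
  have hhi : ∀ t, D t ≤ c + 2 * H := fun t => by
    rw [← sub_le_iff_le_add]
    exact le_inf' _ _ fun u _ => by simp only [D, Pi.sub_apply]; linarith [hWspan t u, hVspan u t]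
  calc probVar p V = probVar p (W - D) := by simp only [D, sub_sub_cancel]
    _ ≤ 2 * probVar p W + 2 * probVar p D := probVar_sub_le hp W D
    _ ≤ 2 * probVar p W + 2 * (2 * H * (probDot p D - c)) := by
        gcongr; exact probVar_le_mul_probDot_sub hp hlo hhi
    _ ≤ 2 * probVar p W + (probDot p W - probDot p V + δ) * (4 * H) := by
        rw [probDot_sub]; nlinarith [mul_nonneg hH (neg_le_iff_add_nonneg.mp hc)]

theorem probDot_sub_le_probDot_add_bonus {A : Type*} (Phat : S → A → S → ℝ) (cnt : S → A → ℝ)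
    {U H δ : ℝ} {s : S} {a : A} {q V W : S → ℝ} (hp : IsProbVec (Phat s a)) (hn : 0 < cnt s a)
    (hU : 0 ≤ U) (hH : 0 ≤ H) (hW : ∀ t, V t - δ ≤ W t) (hVspan : ∀ t u, V t ≤ V u + H)
    (hWspan : ∀ t u, W t ≤ W u + H)
    (hconc : probDot q V - probDot (Phat s a) V
      ≤ 2 * √(probVar (Phat s a) V * U / cnt s a) + 14 * H * U / (3 * cnt s a)) :
    probDot q V - δ ≤ probDot (Phat s a) W + bonus Phat cnt U H s a W := by
  set p := Phat s a
  set x := U / cnt s a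
  set e := probDot p W - probDot p V + δ
  have hx : 0 ≤ x := div_nonneg hU hn.le
  have he : 0 ≤ e := by
    have hWV : -δ ≤ probDot p (W - V) :=
      le_probDot_of_forall_le hp fun t => by simp only [Pi.sub_apply]; linarith [hW t]
    rw [probDot_sub] at hWV
    linarith
  have hsqrt : 2 * √(probVar p V * x) ≤ 2 * √2 * √(probVar p W * x) + e + 4 * H * x := by
    refine two_sqrt_le_of_le_two_mul_add_mul ?_ (mul_nonneg (probVar_nonneg hp W) hx) he
      (by positivity)
    nlinarith [mul_le_mul_of_nonneg_right
      (probVar_le_two_mul_probVar_add hp hH hW hVspan hWspan) hx]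
  have hmax := two_mul_sqrt_two_mul_add_le_max (Real.sqrt_nonneg (probVar p W * x)) (H * x)
  simp only [bonus, mul_div_assoc] at hconc ⊢
  have h14 : 14 * H * (U / (3 * cnt s a)) = 14 / 3 * (H * x) := by
    simp only [x]; field_simp
  have h32 : 32 * H * x = 32 * (H * x) := by ring
  rw [h14] at hconc
  rw [h32]
  linarith

end Transfer

theorem maxOp_sub_le_maxOp {S A : Type*} [Fintype A] [Nonempty A] {Q Q' : S → A → ℝ} {δ : ℝ}
    (h : ∀ s a, Q s a - δ ≤ Q' s a) (s : S) :
    maxOp Q s - δ ≤ maxOp Q' s := by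
  rw [sub_le_iff_le_add]
  refine sup'_le _ _ fun a _ => ?_
  have hle : Q' s a ≤ maxOp Q' s := le_sup' _ (mem_univ a)
  linarith [h s a]

section Bellman

variable {S A : Type*} [Fintype S] [Fintype A] [Nonempty S] [Nonempty A]

theorem le_one_div_one_sub_of_bellman {γ : ℝ} {r Q : S → A → ℝ} {P : S → A → S → ℝ}
    (hγ₀ : 0 ≤ γ) (hγ₁ : γ < 1) (hr : ∀ s a, r s a ≤ 1) (hP : ∀ s a, IsProbVec (P s a))
    (hQ : ∀ s a, Q s a = r s a + γ * probDot (P s a) (maxOp Q)) (s : S) (a : A) :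
    Q s a ≤ 1 / (1 - γ) := by
  set M := univ.sup' univ_nonempty (maxOp Q)
  have hQM : ∀ s a, Q s a ≤ 1 + γ * M := fun s a => by
    rw [hQ]
    exact add_le_add (hr s a) (mul_le_mul_of_nonneg_left
      (probDot_le_of_forall_le (hP s a) fun t => le_sup' (maxOp Q) (mem_univ t)) hγ₀)
  have hM : M ≤ 1 + γ * M := sup'_le _ _ fun t _ => sup'_le _ _ fun a _ => hQM t a
  have hγ : 0 ≤ 1 - γ := by linarith
  rw [le_div_iff₀ (by linarith)]
  nlinarith [mul_le_mul_of_nonneg_right (hQM s a) hγ]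

theorem sub_mul_le_bellmanOp {γ H U δ : ℝ} {r cnt Q Qstar : S → A → ℝ} {Phat P : S → A → S → ℝ}
    (hγ : 0 ≤ γ) (hH : 0 ≤ H) (hU : 0 ≤ U) (hcnt : ∀ s a, 0 < cnt s a)
    (hPhat : ∀ s a, IsProbVec (Phat s a))
    (hBellman : ∀ s a, Qstar s a = r s a + γ * probDot (P s a) (maxOp Qstar))
    (hspan : ∀ t u, maxOp Qstar t ≤ maxOp Qstar u + H)
    (hconc : ∀ s a, probDot (P s a) (maxOp Qstar) - probDot (Phat s a) (maxOp Qstar)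
      ≤ 2 * √(probVar (Phat s a) (maxOp Qstar) * U / cnt s a) + 14 * H * U / (3 * cnt s a))
    (hQ : ∀ s a, Qstar s a - δ ≤ Q s a) (s : S) (a : A) :
    Qstar s a - γ * δ ≤ bellmanOp γ H U r cnt Phat Q s a := by
  have hstep := probDot_sub_le_probDot_add_bonus Phat cnt (hPhat s a) (hcnt s a) hU hH
    (sub_le_clipOp hspan (maxOp_sub_le_maxOp hQ)) hspan (clipOp_le_clipOp_add hH _) (hconc s a)
  rw [hBellman]
  simp only [bellmanOp]
  nlinarith [mul_le_mul_of_nonneg_left hstep hγ]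

end Bellman

theorem rel_pow_mul_iterate {α : Type*} {R : ℝ → α → Prop} {T : α → α} {γ : ℝ}
    (hT : ∀ δ x, R δ x → R (γ * δ) (T x)) {δ : ℝ} {x : α} (hx : R δ x) :
    ∀ k : ℕ, R (γ ^ k * δ) (T^[k] x)
  | 0 => by simpa using hx
  | k + 1 => by
    rw [Function.iterate_succ_apply', pow_succ', mul_assoc]
    exact hT _ _ (rel_pow_mul_iterate hT hx k)

theorem bellmanOp_iterate_optimism_general
    {S A : Type*} [Fintype S] [Fintype A] [Nonempty S] [Nonempty A]
    (γ H U : ℝ) (hγ₀ : 0 < γ) (hγ₁ : γ < 1) (hH : 0 ≤ H) (hU : 1 ≤ U)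
    (r : S → A → ℝ) (hr : ∀ s a, r s a ∈ Set.Icc (0 : ℝ) 1)
    (cnt : S → A → ℝ) (hcnt : ∀ s a, 1 ≤ cnt s a)
    (Phat : S → A → S → ℝ)
    (hPnonneg : ∀ s a s', 0 ≤ Phat s a s')
    (hPsum : ∀ s a, ∑ s', Phat s a s' = 1)
    (P : S → A → S → ℝ)
    (hPtrueNonneg : ∀ s a s', 0 ≤ P s a s')
    (hPtrueSum : ∀ s a, ∑ s', P s a s' = 1)
    (Qstar : S → A → ℝ)
    (hBellman : ∀ s a, Qstar s a = r s a + γ * probDot (P s a) (maxOp Qstar))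
    (hspan : Finset.univ.sup' Finset.univ_nonempty (maxOp Qstar)
        - Finset.univ.inf' Finset.univ_nonempty (maxOp Qstar) ≤ H)
    (hconc : ∀ s a,
      |probDot (Phat s a) (maxOp Qstar) - probDot (P s a) (maxOp Qstar)|
        ≤ 2 * Real.sqrt (probVar (Phat s a) (maxOp Qstar) * U / cnt s a)
          + 14 * H * U / (3 * cnt s a))
    (ε : ℝ) (m : ℕ)
    (hm : γ ^ m * (1 + 32 * H * U) / (1 - γ) ≤ ε) :
    (∀ s a, Qstar s a - ε ≤ (bellmanOp γ H U r cnt Phat)^[m] (fun _ _ => 0) s a)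
    ∧
    (∀ s, maxOp Qstar s - ε
      ≤ clipOp H (maxOp ((bellmanOp γ H U r cnt Phat)^[m] (fun _ _ => 0))) s) := by
  have hVspan := le_add_of_sup'_sub_inf'_le hspan
  set C := (1 + 32 * H * U) / (1 - γ)
  have hQstar_le : ∀ s a, Qstar s a - C ≤ 0 := fun s a => by
    have hQ := le_one_div_one_sub_of_bellman hγ₀.le hγ₁ (fun s a => (hr s a).2)
      (fun s a => ⟨hPtrueNonneg s a, hPtrueSum s a⟩) hBellman s a
    have hC : 1 / (1 - γ) ≤ C := div_le_div_of_nonneg_right (by nlinarith) (by linarith)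
    linarith
  have hiter := rel_pow_mul_iterate (R := fun δ (Q : S → A → ℝ) => ∀ s a, Qstar s a - δ ≤ Q s a)
    (fun δ Q hQ => sub_mul_le_bellmanOp hγ₀.le hH (zero_le_one.trans hU)
      (fun s a => zero_lt_one.trans_le (hcnt s a)) (fun s a => ⟨hPnonneg s a, hPsum s a⟩)
      hBellman hVspan (fun s a => (le_abs_self _).trans ((abs_sub_comm _ _).trans_le (hconc s a)))
      hQ)
    hQstar_le m
  have hmC : γ ^ m * C ≤ ε := by rwa [← mul_div_assoc]
  exact ⟨fun s a => by linarith [hiter s a],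
    fun s => by linarith [sub_le_clipOp hVspan (maxOp_sub_le_maxOp hiter) s]⟩

/-- Optimism of the finitely-iterated Q-estimate: under the span and
concentration conditions, if `γ^m (1 + 32HU)/(1-γ) ≤ ε` then the `m`-th
iterate of `T̂` from zero is `ε`-optimistic for `Q*`, and its clipped value
function is `ε`-optimistic for `V* = MQ*`. -/
theorem bellmanOp_iterate_optimism
    {S A : Type*} [Fintype S] [Fintype A] [Nonempty S] [Nonempty A]
    (γ H U : ℝ) (hγ₀ : 0 < γ) (hγ₁ : γ < 1) (hH : 0 ≤ H) (hU : 1 ≤ U)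
    (r : S → A → ℝ) (hr : ∀ s a, r s a ∈ Set.Icc (0 : ℝ) 1)
    (cnt : S → A → ℝ) (hcnt : ∀ s a, 1 ≤ cnt s a)
    (Phat : S → A → S → ℝ)
    (hPnonneg : ∀ s a s', 0 ≤ Phat s a s')
    (hPle : ∀ s a s', Phat s a s' ≤ 1)
    (hPsum : ∀ s a, ∑ s', Phat s a s' = 1)
    (P : S → A → S → ℝ)
    (hPtrueNonneg : ∀ s a s', 0 ≤ P s a s')
    (hPtrueLe : ∀ s a s', P s a s' ≤ 1)
    (hPtrueSum : ∀ s a, ∑ s', P s a s' = 1)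
    (Qstar : S → A → ℝ)
    (hBellman : ∀ s a, Qstar s a = r s a + γ * probDot (P s a) (maxOp Qstar))
    (hspan : Finset.univ.sup' Finset.univ_nonempty (maxOp Qstar)
        - Finset.univ.inf' Finset.univ_nonempty (maxOp Qstar) ≤ H)
    (hconc : ∀ s a,
      |probDot (Phat s a) (maxOp Qstar) - probDot (P s a) (maxOp Qstar)|
        ≤ 2 * Real.sqrt (probVar (Phat s a) (maxOp Qstar) * U / cnt s a)
          + 14 * H * U / (3 * cnt s a))
    (ε : ℝ) (hε : 0 < ε) (m : ℕ)
    (hm : γ ^ m * (1 + 32 * H * U) / (1 - γ) ≤ ε) :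
    (∀ s a, Qstar s a - ε ≤ (bellmanOp γ H U r cnt Phat)^[m] (fun _ _ => 0) s a)
    ∧
    (∀ s, maxOp Qstar s - ε
      ≤ clipOp H (maxOp ((bellmanOp γ H U r cnt Phat)^[m] (fun _ _ => 0))) s) :=
  bellmanOp_iterate_optimism_general γ H U hγ₀ hγ₁ hH hU r hr cnt hcnt Phat hPnonneg hPsum P
    hPtrueNonneg hPtrueSum Qstar hBellman hspan hconc ε m hm
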